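/- Let μ₁, μ₂ be finite positive Borel measures and ν₁₂ a complex measure on a compact metric space X with |ν₁₂(E)|² ≤ μ₁(E)μ₂(E) for all Borel E. Let θ₁ ≠ 0, θ₂ be real numbers and set ν = θ₁²μ₁ + θ₂²μ₂ + 2θ₁θ₂ Re ν₁₂. If U is an open set with supp μ₁ ∩ supp μ₂ ∩ U = ∅ and ν restricted to U is zero, then μ₁ restricted to U is zero. -/

import Mathlib

/-!
On `U` the restriction of `μ₁` is absolutely continuous with respect to `μ₂`: on a `μ₂`-null
set the domination `|ν₁₂|² ≤ μ₁ μ₂` kills `ν₁₂`, so `ν` reduces to `θ₁² μ₁`, which must vanish.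
It is also singular to `μ₂`, since `μ₂` lives on its support while the restriction of `μ₁` lives on
`supp μ₁ ∩ U`, which misses that support. A measure both absolutely continuous and singular with
respect to another is zero.
-/

open MeasureTheory

/-- The support of a positive measure: points all of whose open neighbourhoods have
positive measure. -/
def measureSupport {X : Type*} [TopologicalSpace X] [MeasurableSpace X]
    (μ : Measure X) : Set X :=
  {x | ∀ U : Set X, IsOpen U → x ∈ U → 0 < μ U}

lemma measureSupport_eq_support {X : Type*} [TopologicalSpace X] [MeasurableSpace X]
    (μ : Measure X) : measureSupport μ = μ.support := by
  rw [Measure.support_eq_forall_isOpen]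
  ext x
  exact forall_congr' fun U => forall_comm

lemma mutuallySingular_restrict_of_support_inter_eq_empty {X : Type*}
    [TopologicalSpace X] [HereditarilyLindelofSpace X] [MeasurableSpace X]
    [OpensMeasurableSpace X] {μ ν : Measure X} {U : Set X}
    (h : μ.support ∩ ν.support ∩ U = ∅) : μ.restrict U ⟂ₘ ν := by
  refine ⟨ν.support, Measure.isClosed_support.measurableSet, ?_, ν.measure_compl_support⟩
  rw [Measure.restrict_apply Measure.isClosed_support.measurableSet]
  have hsub : ν.support ∩ U ⊆ μ.supportᶜ := fun x hx hxμ => h.subset ⟨⟨hxμ, hx.1⟩, hx.2⟩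
  exact measure_mono_null hsub μ.measure_compl_support

lemma measure_eq_zero_of_combination_eq_zero {X : Type*} [MeasurableSpace X]
    {μ₁ μ₂ : Measure X} {ν₁₂ : ComplexMeasure X} {θ₁ θ₂ : ℝ} {E : Set X}
    (hdom : ‖ν₁₂ E‖ ^ 2 ≤ (μ₁ E).toReal * (μ₂ E).toReal)
    (hν : θ₁ ^ 2 * (μ₁ E).toReal + θ₂ ^ 2 * (μ₂ E).toReal + 2 * θ₁ * θ₂ * (ν₁₂ E).re = 0)
    (hθ₁ : θ₁ ≠ 0) (hμ₁ : μ₁ E ≠ ⊤) (hμ₂ : μ₂ E = 0) : μ₁ E = 0 := by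
  have hν₁₂ : ν₁₂ E = 0 := by
    rw [hμ₂, ENNReal.toReal_zero, mul_zero] at hdom
    exact norm_eq_zero.mp (pow_eq_zero_iff two_ne_zero |>.mp
      (le_antisymm hdom (sq_nonneg _)))
  rw [hμ₂, hν₁₂, ENNReal.toReal_zero, Complex.zero_re] at hν
  have hμ₁_toReal : (μ₁ E).toReal = 0 := by
    simpa [hθ₁] using hν
  exact (ENNReal.toReal_eq_zero_iff _).mp hμ₁_toReal |>.resolve_right hμ₁

theorem diagonal_vanishes_of_combination_vanishing_general
    {X : Type*} [MetricSpace X] [CompactSpace X] [MeasurableSpace X] [BorelSpace X]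
    (μ₁ μ₂ : Measure X) [IsFiniteMeasure μ₁]
    (ν₁₂ : ComplexMeasure X)
    (hdom : ∀ E : Set X, MeasurableSet E →
      ‖ν₁₂ E‖ ^ 2 ≤ (μ₁ E).toReal * (μ₂ E).toReal)
    (θ₁ θ₂ : ℝ) (hθ₁ : θ₁ ≠ 0)
    (U : Set X) (hU : IsOpen U)
    (hsupp : measureSupport μ₁ ∩ measureSupport μ₂ ∩ U = ∅)
    (hν : ∀ E : Set X, MeasurableSet E → E ⊆ U →
      θ₁ ^ 2 * (μ₁ E).toReal + θ₂ ^ 2 * (μ₂ E).toReal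
        + 2 * θ₁ * θ₂ * (ν₁₂ E).re = 0) :
    ∀ E : Set X, MeasurableSet E → E ⊆ U → μ₁ E = 0 := by
  intro E _ hEU
  have hac : μ₁.restrict U ≪ μ₂ := by
    refine Measure.AbsolutelyContinuous.mk fun s hs hs_null => ?_
    have hsU := hs.inter hU.measurableSet
    rw [Measure.restrict_apply hs]
    exact measure_eq_zero_of_combination_eq_zero (hdom _ hsU) (hν _ hsU Set.inter_subset_right)
      hθ₁ (measure_ne_top _ _) (measure_mono_null Set.inter_subset_left hs_null)
  rw [measureSupport_eq_support, measureSupport_eq_support] at hsupp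
  have hμ₁U : μ₁.restrict U = 0 := Measure.eq_zero_of_absolutelyContinuous_of_mutuallySingular
    hac (mutuallySingular_restrict_of_support_inter_eq_empty hsupp)
  exact measure_mono_null hEU (Measure.restrict_eq_zero.mp hμ₁U)

/-- if `ν = θ₁²μ₁ + θ₂²μ₂ + 2θ₁θ₂ Re ν₁₂` vanishes on an open set `U`
on which the supports of `μ₁` and `μ₂` are disjoint, then `μ₁` vanishes on `U`. -/
theorem diagonal_vanishes_of_combination_vanishing
    {X : Type*} [MetricSpace X] [CompactSpace X] [MeasurableSpace X] [BorelSpace X]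
    (μ₁ μ₂ : Measure X) [IsFiniteMeasure μ₁] [IsFiniteMeasure μ₂]
    (ν₁₂ : ComplexMeasure X)
    (hdom : ∀ E : Set X, MeasurableSet E →
      ‖ν₁₂ E‖ ^ 2 ≤ (μ₁ E).toReal * (μ₂ E).toReal)
    (θ₁ θ₂ : ℝ) (hθ₁ : θ₁ ≠ 0)
    (U : Set X) (hU : IsOpen U)
    (hsupp : measureSupport μ₁ ∩ measureSupport μ₂ ∩ U = ∅)
    (hν : ∀ E : Set X, MeasurableSet E → E ⊆ U →
      θ₁ ^ 2 * (μ₁ E).toReal + θ₂ ^ 2 * (μ₂ E).toReal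
        + 2 * θ₁ * θ₂ * (ν₁₂ E).re = 0) :
    ∀ E : Set X, MeasurableSet E → E ⊆ U → μ₁ E = 0 :=
  diagonal_vanishes_of_combination_vanishing_general μ₁ μ₂ ν₁₂ hdom θ₁ θ₂ hθ₁ U hU hsupp hν
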